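/- arXiv:1106.3313 — 3 statements merged into one kernel-verified Lean document; each statement's English description precedes it below -/
import Mathlib

section
/- Let p > q > 0 be coprime integers. Set N₁ = (q+1)/2 if q is odd and N₁ = (p+q+1)/2 if q is even (in both cases N₁ is a natural number), and for j = 1,…,p let N_j be the unique element of {1,…,p} with N_j ≡ N₁ + (j−1)q (mod p). Then for all i, j ∈ {1,…,p} with i + j = p + 1 one has N_i + N_j = p + 1. -/
/-- for coprime `p > q > 0`, with `N₁ = (q+1)/2` (`q` odd) or
`N₁ = (p+q+1)/2` (`q` even), and `N j` the unique element of `{1,…,p}` congruent to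
`N₁ + (j−1)q` modulo `p`, one has `N i + N j = p + 1` whenever `i + j = p + 1`
with `i, j ∈ {1,…,p}`. -/
theorem stmt_4 (p q : ℕ) (hq : 0 < q) (hqp : q < p) (hpq : Nat.Coprime p q)
    (N₁ : ℕ) (hN₁odd : Odd q → 2 * N₁ = q + 1) (hN₁even : Even q → 2 * N₁ = p + q + 1)
    (N : ℕ → ℕ)
    (hNrange : ∀ j, 1 ≤ j → j ≤ p → 1 ≤ N j ∧ N j ≤ p)
    (hNmod : ∀ j, 1 ≤ j → j ≤ p → N j ≡ N₁ + (j - 1) * q [MOD p])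
    (i j : ℕ) (hi1 : 1 ≤ i) (hip : i ≤ p) (hj1 : 1 ≤ j) (hjp : j ≤ p)
    (hij : i + j = p + 1) :
    N i + N j = p + 1 := by
  obtain ⟨hi1', hip'⟩ := hNrange i hi1 hip
  obtain ⟨hj1', hjp'⟩ := hNrange j hj1 hjp
  have hsum : N i + N j ≡ 2 * N₁ + (p - 1) * q [MOD p] := by
    have h := (hNmod i hi1 hip).add (hNmod j hj1 hjp)
    have heq : N₁ + (i - 1) * q + (N₁ + (j - 1) * q) = 2 * N₁ + (p - 1) * q := by
      have hpij : (i - 1) + (j - 1) = p - 1 := by omega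
      rw [← hpij, Nat.add_mul]; ring
    rwa [heq] at h
  obtain ⟨r, hr⟩ : ∃ r, p = r + 1 := ⟨p - 1, by omega⟩
  subst hr
  have hone : 2 * N₁ + (r + 1 - 1) * q ≡ 1 [MOD r + 1] := by
    simp only [Nat.add_sub_cancel]
    rcases Nat.even_or_odd q with he | ho
    · have h2 : 2 * N₁ = (r + 1) + q + 1 := hN₁even he
      have hexp : (q + 1) * (r + 1) = r * q + q + r + 1 := by ring
      have : 2 * N₁ + r * q = 1 + (q + 1) * (r + 1) := by omega
      rw [this]
      show (1 + (q + 1) * (r + 1)) % (r + 1) = 1 % (r + 1)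
      simp [Nat.add_mul_mod_self_right]
    · have h2 : 2 * N₁ = q + 1 := hN₁odd ho
      have hexp : q * (r + 1) = r * q + q := by ring
      have : 2 * N₁ + r * q = 1 + q * (r + 1) := by omega
      rw [this]
      show (1 + q * (r + 1)) % (r + 1) = 1 % (r + 1)
      simp [Nat.add_mul_mod_self_right]
  have hfin : N i + N j ≡ 1 [MOD r + 1] := hsum.trans hone
  have hmod : (N i + N j) % (r + 1) = 1 % (r + 1) := hfin
  have h1p : 1 % (r + 1) = 1 := Nat.mod_eq_of_lt (by omega)
  have hd := Nat.div_add_mod (N i + N j) (r + 1)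
  generalize hk : (N i + N j) / (r + 1) = k at hd
  have hS : N i + N j = (r + 1) * k + 1 := by omega
  have hk1 : k = 1 := by
    rcases Nat.lt_or_ge k 1 with h0 | h1
    · have hk0 : k = 0 := by omega
      rw [hk0, Nat.mul_zero] at hS; omega
    · rcases Nat.lt_or_ge k 2 with h' | h'
      · omega
      · have : (r + 1) * 2 ≤ (r + 1) * k := Nat.mul_le_mul_left (r + 1) h'
        omega
  rw [hk1, Nat.mul_one] at hS
  omega
end

section
/- Let p > q > 0 be coprime integers with q odd, and for i ∈ {1,…,q} define k_i = 1 + ⌊(p/q)(i−1) + (q−1)/(2q)⌋. Then for every i ∈ {2,…,q} one has k_i + k_{q+2−i} = p + 2. -/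
/-! Write `q = 2r + 1`. Then `k_i - 1 = ⌊(p(i - 1) + r) / q⌋`, and the numerators for `i` and
`q + 2 - i` add up to `q(p + 1) - 1`. Their remainders modulo `q` lie in `[0, q - 1]` and add up to
`-1` modulo `q`, so they add up to exactly `q - 1`, and the quotients add up to `p`. -/

theorem Int.ediv_add_ediv_of_add_add_one_eq_mul {x y q n : ℤ} (hq : 0 < q)
    (h : x + y + 1 = q * n) : x / q + y / q = n - 1 := by
  have hx := Int.mul_ediv_add_emod x q
  have hy := Int.mul_ediv_add_emod y q
  have := Int.emod_nonneg x hq.ne'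
  have := Int.emod_nonneg y hq.ne'
  have := Int.emod_lt_of_pos x hq
  have := Int.emod_lt_of_pos y hq
  have hsum : x % q + y % q + 1 = q * (n - x / q - y / q) := by linear_combination h + hx + hy
  have hk : n - x / q - y / q = 1 := by
    have := pos_of_mul_pos_right (a := q) (b := n - x / q - y / q) (by omega) hq.le
    have := lt_of_mul_lt_mul_left (a := q) (b := n - x / q - y / q) (c := 2) (by omega) hq.le
    omega
  omega

theorem floor_div_mul_sub_one_add_half_eq_ediv (p q r i : ℤ) (h0q : 0 < q) (hr : q = 2 * r + 1) :
    ⌊(p : ℝ) / (q : ℝ) * ((i : ℝ) - 1) + ((q : ℝ) - 1) / (2 * (q : ℝ))⌋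
      = (p * (i - 1) + r) / q := by
  have hq : (q : ℝ) ≠ 0 := by exact_mod_cast h0q.ne'
  have hreal : (p : ℝ) / q * (i - 1) + (q - 1) / (2 * q)
      = ((p * (i - 1) + r : ℤ) : ℝ) / (q : ℤ) := by
    rw [hr] at hq ⊢
    push_cast at hq ⊢
    field_simp
    ring
  rw [hreal, Int.floor_div_cast_of_nonneg h0q.le, Int.floor_intCast]

theorem stmt_7_general (p q : ℤ) (h0q : 0 < q)
    (hqodd : Odd q)
    (kk : ℤ → ℤ)
    (hk : ∀ i : ℤ, kk i =
      1 + ⌊(p : ℝ) / (q : ℝ) * ((i : ℝ) - 1) + ((q : ℝ) - 1) / (2 * (q : ℝ))⌋)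
    (i : ℤ) :
    kk i + kk (q + 2 - i) = p + 2 := by
  obtain ⟨r, hr⟩ := hqodd
  have hquot := Int.ediv_add_ediv_of_add_add_one_eq_mul (x := p * (i - 1) + r)
    (y := p * (q + 2 - i - 1) + r) (n := p + 1) h0q (by rw [hr]; ring)
  rw [hk, hk, floor_div_mul_sub_one_add_half_eq_ediv p q r _ h0q hr,
    floor_div_mul_sub_one_add_half_eq_ediv p q r _ h0q hr]
  omega

/-- for coprime `p > q > 0` with `q` odd and
`k_i = 1 + ⌊(p/q)(i−1) + (q−1)/(2q)⌋`, one has `k_i + k_{q+2−i} = p + 2`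
for every `i ∈ {2,…,q}`. -/
theorem stmt_7 (p q : ℤ) (h0q : 0 < q) (hqp : q < p) (hpq : IsCoprime p q)
    (hqodd : Odd q)
    (kk : ℤ → ℤ)
    (hk : ∀ i : ℤ, kk i =
      1 + ⌊(p : ℝ) / (q : ℝ) * ((i : ℝ) - 1) + ((q : ℝ) - 1) / (2 * (q : ℝ))⌋)
    (i : ℤ) (hi2 : 2 ≤ i) (hiq : i ≤ q) :
    kk i + kk (q + 2 - i) = p + 2 :=
  stmt_7_general p q h0q hqodd kk hk i
end

section
/- Let p > q > 0 be coprime integers with q even, and for j ∈ {1,…,q} define k_j = 1 + ⌊(p/q)(j−1/2) + (q−1)/(2q)⌋. Then for every j ∈ {1,…,q} one has k_j + k_{q+1−j} = p + 2. -/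
/-! Writing `k_j = 1 + A_j / (2q)` with `A_j = p(2j-1) + q - 1`, one has
`A_j + A_{q+1-j} = 2q(p+1) - 2`. Two integers summing to `-2` modulo `m` have remainders summing
to `m - 2`, hence quotients summing to one less than expected, unless both remainders are `m - 1`.
For `m = 2q` that exceptional case would force `q ∣ p(2j-1)`, impossible since `q` is even and
coprime to `p` while `2j-1` is odd. -/

theorem Int.ediv_add_ediv_of_add_eq_mul_sub_two {m n a b : ℤ} (hm : 0 < m)
    (hab : a + b = m * n - 2) (ha : a % m ≠ m - 1) : a / m + b / m = n - 1 := by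
  have hr₀ := Int.emod_nonneg a hm.ne'
  have hr₁ := Int.emod_lt_of_pos a hm
  have hb : b / m = n - 1 - a / m := by
    refine ((Int.ediv_emod_unique (r := m - 2 - a % m) hm).2 ⟨?_, by omega, by omega⟩).1
    linear_combination -hab - Int.emod_def a m
  omega

theorem emod_two_mul_ne_of_not_dvd {q x : ℤ} (hx : ¬q ∣ x) :
    (x + q - 1) % (2 * q) ≠ 2 * q - 1 := by
  intro h
  refine hx ⟨2 * ((x + q - 1) / (2 * q)) + 1, ?_⟩
  linear_combination h - Int.emod_def (x + q - 1) (2 * q)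

theorem not_dvd_mul_of_even_of_odd {p q n : ℤ} (hpq : IsCoprime p q) (hq : Even q)
    (hn : Odd n) : ¬q ∣ p * n := fun h ↦
  Int.not_even_iff_odd.2 hn <|
    even_iff_two_dvd.2 (hq.two_dvd.trans (hpq.symm.dvd_of_dvd_mul_left h))

theorem floor_div_mul_sub_half_add {p q : ℤ} (hq : 0 < q) (i : ℤ) :
    ⌊(p : ℝ) / q * (i - 1 / 2) + (q - 1) / (2 * q)⌋ = (p * (2 * i - 1) + q - 1) / (2 * q) := by
  have hq' : (q : ℝ) ≠ 0 := by exact_mod_cast hq.ne'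
  have h : (p : ℝ) / q * (i - 1 / 2) + (q - 1) / (2 * q)
      = ((p * (2 * i - 1) + q - 1 : ℤ) : ℝ) / ((2 * q : ℤ) : ℝ) := by
    push_cast
    field_simp
    ring
  rw [h, Int.floor_div_cast_of_nonneg (by omega), Int.floor_intCast]

theorem stmt_9_general (p q : ℤ) (h0q : 0 < q) (hpq : IsCoprime p q)
    (hqeven : Even q)
    (kk : ℤ → ℤ)
    (hk : ∀ j : ℤ, kk j =
      1 + ⌊(p : ℝ) / (q : ℝ) * ((j : ℝ) - 1 / 2) + ((q : ℝ) - 1) / (2 * (q : ℝ))⌋)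
    (j : ℤ) :
    kk j + kk (q + 1 - j) = p + 2 := by
  have hodd : Odd (2 * j - 1) := ⟨j - 1, by ring⟩
  have hsum := Int.ediv_add_ediv_of_add_eq_mul_sub_two (n := p + 1) (by omega)
    (a := p * (2 * j - 1) + q - 1) (b := p * (2 * (q + 1 - j) - 1) + q - 1) (by ring)
    (emod_two_mul_ne_of_not_dvd (not_dvd_mul_of_even_of_odd hpq hqeven hodd))
  rw [hk, hk, floor_div_mul_sub_half_add h0q, floor_div_mul_sub_half_add h0q]
  omega

/-- for coprime `p > q > 0` with `q` even and
`k_j = 1 + ⌊(p/q)(j−1/2) + (q−1)/(2q)⌋`, one has `k_j + k_{q+1−j} = p + 2`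
for every `j ∈ {1,…,q}`. -/
theorem stmt_9 (p q : ℤ) (h0q : 0 < q) (hqp : q < p) (hpq : IsCoprime p q)
    (hqeven : Even q)
    (kk : ℤ → ℤ)
    (hk : ∀ j : ℤ, kk j =
      1 + ⌊(p : ℝ) / (q : ℝ) * ((j : ℝ) - 1 / 2) + ((q : ℝ) - 1) / (2 * (q : ℝ))⌋)
    (j : ℤ) (hj1 : 1 ≤ j) (hjq : j ≤ q) :
    kk j + kk (q + 1 - j) = p + 2 :=
  stmt_9_general p q h0q hpq hqeven kk hk j
end
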